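/- arXiv:2601.09308 — 2 statements merged into one kernel-verified Lean document; each statement's English description precedes it below -/
import Mathlib

section
/- Let Q be a probability measure and let (X_1, F_1), (X_2, F_2), …, (X_n, F_n) be a non-negative martingale with respect to Q with E[X_n] = 1. For 1 ≤ m ≤ n set X_{m,n}^max := max_{m ≤ j ≤ n} X_j and X_{m,n}^min := min_{m ≤ j ≤ n} X_j, and let P_j := Q.withDensity X_j. Then γ(E[X_{m,n}^max]) ≤ D(P_n‖P_m) and γ(E[X_{m,n}^min]) ≤ D(P_n‖P_m), where γ(x) = x − 1 − ln x. -/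
open MeasureTheory Filter Topology ENNReal

open Classical in
/-- Information divergence `D(μ‖ν)`: if `μ ≪ ν` it is `∫ (ρ ln ρ − ρ + 1) dν` where
`ρ` is the density of `μ` with respect to `ν`, and `∞` otherwise. -/
noncomputable def infoDiv {Ω : Type*} [MeasurableSpace Ω] (μ ν : Measure Ω) : ℝ≥0∞ :=
  if μ ≪ ν then
    ∫⁻ x, ENNReal.ofReal ((μ.rnDeriv ν x).toReal * Real.log (μ.rnDeriv ν x).toReal
      - (μ.rnDeriv ν x).toReal + 1) ∂ν
  else ∞

/-- The function `γ(x) = x − 1 − ln x`. -/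
noncomputable def gammaFn (x : ℝ) : ℝ := x - 1 - Real.log x

/-!
Write `Pⱼ` for `Q.withDensity Xⱼ` and `Z` for `X^max_{m,n} / Xₘ`, so that `E_{Pₘ}[Z] = E[X^max]`.
Stopping at the first `j ∈ [m, n]` with `Xⱼ > c Xₘ` gives the conditional Doob inequality
`c Pₘ(Z > c) ≤ Pₙ(Z > c)`; integrated against the layer-cake representations this becomes
`E_{Pₘ}[Z] - 1 ≤ E_{Pₙ}[ln Z]`. The Donsker–Varadhan inequality
`E_{Pₙ}[ln Z] ≤ D(Pₙ‖Pₘ) + ln E_{Pₘ}[Z]` then gives `γ(E[X^max]) ≤ D(Pₙ‖Pₘ)`.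
For the minimum, `Z = X^min / Xₘ` satisfies the reversed Doob inequality, whence
`E_{Pₙ}[-ln Z] ≤ 1 - E_{Pₘ}[Z]`; since a non-negative martingale stays at `0` once it gets
there, `Z > 0` holds `Pₙ`-almost surely.
-/

open InformationTheory Real Set

section Divergence

variable {Ω : Type*} [MeasurableSpace Ω] {μ ν : Measure Ω} {Z : Ω → ℝ}

theorem infoDiv_eq_klDiv [IsFiniteMeasure μ] [IsFiniteMeasure ν] : infoDiv μ ν = klDiv μ ν := by
  classical
  simp only [infoDiv, klDiv_eq_lintegral_klFun, klFun_apply, sub_add_eq_add_sub]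

lemma integral_pos_of_ae_pos [NeZero μ] (hZ : Integrable Z μ) (hZ_pos : ∀ᵐ x ∂μ, 0 < Z x) :
    0 < ∫ x, Z x ∂μ := by
  refine (integral_pos_iff_support_of_nonneg_ae (hZ_pos.mono fun x h ↦ h.le) hZ).2 ?_
  have hsupp : Function.support Z =ᵐ[μ] univ :=
    ae_eq_univ.mpr (ae_iff.mp (hZ_pos.mono fun x h ↦ h.ne'))
  simp [measure_congr hsupp, NeZero.ne]

theorem integral_log_le_log_integral [IsProbabilityMeasure μ] (hZ : Integrable Z μ)
    (hZ_pos : ∀ᵐ x ∂μ, 0 < Z x) (hlog : Integrable (fun x ↦ log (Z x)) μ) :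
    ∫ x, log (Z x) ∂μ ≤ log (∫ x, Z x ∂μ) := by
  set c := ∫ x, Z x ∂μ
  have hc : 0 < c := integral_pos_of_ae_pos hZ hZ_pos
  have htangent : ∀ᵐ x ∂μ, log (Z x) ≤ Z x / c - 1 + log c := by
    filter_upwards [hZ_pos] with x hx
    have := log_le_sub_one_of_pos (div_pos hx hc)
    rw [log_div hx.ne' hc.ne'] at this
    linarith
  have hZc : Integrable (fun x ↦ Z x / c - 1) μ := (hZ.div_const c).sub (integrable_const 1)
  calc ∫ x, log (Z x) ∂μ ≤ ∫ x, (Z x / c - 1 + log c) ∂μ :=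
        integral_mono_ae hlog (hZc.add (integrable_const _)) htangent
    _ = log c := by
        rw [integral_add hZc (integrable_const _), integral_sub (hZ.div_const c)
          (integrable_const 1), integral_div, div_self hc.ne']
        simp

lemma mul_div_le_of_nonneg {a b : ℝ} (ha : 0 ≤ a) (hb : 0 ≤ b) : a * (b / a) ≤ b := by
  rcases ha.eq_or_lt with rfl | ha
  · simpa using hb
  · rw [mul_div_cancel₀ _ ha.ne']

variable [SigmaFinite μ] [SigmaFinite ν]

theorem integrable_div_toReal_rnDeriv (hμν : μ ≪ ν) (hZ : Integrable Z ν)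
    (hZ_nonneg : 0 ≤ᵐ[ν] Z) : Integrable (fun x ↦ Z x / (μ.rnDeriv ν x).toReal) μ := by
  have hr := (Measure.measurable_rnDeriv μ ν).ennreal_toReal.aestronglyMeasurable (μ := ν)
  refine (integrable_toReal_rnDeriv_mul_iff hμν).1 (hZ.mono' (hr.mul (hZ.1.div₀ hr)) ?_)
  filter_upwards [hZ_nonneg] with x hx
  rw [Real.norm_of_nonneg (mul_nonneg ENNReal.toReal_nonneg (div_nonneg hx ENNReal.toReal_nonneg))]
  exact mul_div_le_of_nonneg ENNReal.toReal_nonneg hx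

theorem integral_div_toReal_rnDeriv_le (hμν : μ ≪ ν) (hZ : Integrable Z ν)
    (hZ_nonneg : 0 ≤ᵐ[ν] Z) : ∫ x, Z x / (μ.rnDeriv ν x).toReal ∂μ ≤ ∫ x, Z x ∂ν := by
  rw [← integral_toReal_rnDeriv_mul hμν]
  refine integral_mono_ae ((integrable_toReal_rnDeriv_mul_iff hμν).2
    (integrable_div_toReal_rnDeriv hμν hZ hZ_nonneg)) hZ ?_
  filter_upwards [hZ_nonneg] with x hx using mul_div_le_of_nonneg ENNReal.toReal_nonneg hx

lemma ae_pos_toReal_rnDeriv (hμν : μ ≪ ν) : ∀ᵐ x ∂μ, 0 < (μ.rnDeriv ν x).toReal := by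
  filter_upwards [Measure.rnDeriv_pos hμν, hμν.ae_le (Measure.rnDeriv_lt_top μ ν)] with x h0 htop
  exact ENNReal.toReal_pos h0.ne' htop.ne

lemma ae_log_eq_llr_add_log_div (hμν : μ ≪ ν) (hZ_pos : ∀ᵐ x ∂μ, 0 < Z x) :
    ∀ᵐ x ∂μ, log (Z x) = llr μ ν x + log (Z x / (μ.rnDeriv ν x).toReal) := by
  filter_upwards [ae_pos_toReal_rnDeriv hμν, hZ_pos] with x hr hZ
  rw [llr_def, log_div hZ.ne' hr.ne']
  ring

/-- The Donsker–Varadhan inequality for `f = log Z`. -/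
theorem integral_log_le_toReal_klDiv_add_log_integral [IsProbabilityMeasure μ]
    [IsProbabilityMeasure ν] (hμν : μ ≪ ν) (hKL : klDiv μ ν ≠ ∞) (hZ : Integrable Z ν)
    (hZ_nonneg : 0 ≤ᵐ[ν] Z) (hZ_pos : ∀ᵐ x ∂μ, 0 < Z x)
    (hlog : Integrable (fun x ↦ log (Z x)) μ) :
    ∫ x, log (Z x) ∂μ ≤ (klDiv μ ν).toReal + log (∫ x, Z x ∂ν) := by
  set W := fun x ↦ Z x / (μ.rnDeriv ν x).toReal
  have hllr : Integrable (llr μ ν) μ := (klDiv_ne_top_iff.mp hKL).2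
  have hW : Integrable W μ := integrable_div_toReal_rnDeriv hμν hZ hZ_nonneg
  have hW_pos : ∀ᵐ x ∂μ, 0 < W x := by
    filter_upwards [ae_pos_toReal_rnDeriv hμν, hZ_pos] with x hr hZ using div_pos hZ hr
  have hsplit := ae_log_eq_llr_add_log_div hμν hZ_pos
  have hlogW : Integrable (fun x ↦ log (W x)) μ :=
    (hlog.sub hllr).congr (hsplit.mono fun x hx ↦ by simp only [Pi.sub_apply, hx]; ring)
  calc ∫ x, log (Z x) ∂μ = ∫ x, llr μ ν x ∂μ + ∫ x, log (W x) ∂μ := by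
        rw [integral_congr_ae hsplit, integral_add hllr hlogW]
    _ ≤ (klDiv μ ν).toReal + log (∫ x, W x ∂μ) := by
        rw [toReal_klDiv_of_measure_eq hμν (by simp)]
        gcongr
        exact integral_log_le_log_integral hW hW_pos hlogW
    _ ≤ (klDiv μ ν).toReal + log (∫ x, Z x ∂ν) := by
        gcongr
        · exact integral_pos_of_ae_pos hW hW_pos
        · exact integral_div_toReal_rnDeriv_le hμν hZ hZ_nonneg

theorem integrable_log_of_one_le (hμν : μ ≪ ν) (hKL : klDiv μ ν ≠ ∞) (hZ : Integrable Z ν)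
    (hZ_nonneg : 0 ≤ᵐ[ν] Z) (hZ_one : ∀ᵐ x ∂μ, 1 ≤ Z x) :
    Integrable (fun x ↦ log (Z x)) μ := by
  have hZ_pos : ∀ᵐ x ∂μ, 0 < Z x := hZ_one.mono fun x h ↦ one_pos.trans_le h
  refine ((klDiv_ne_top_iff.mp hKL).2.add (integrable_div_toReal_rnDeriv hμν hZ hZ_nonneg)).mono'
    (measurable_log.comp_aemeasurable (hZ.1.mono_ac hμν).aemeasurable).aestronglyMeasurable ?_
  filter_upwards [ae_log_eq_llr_add_log_div hμν hZ_pos, ae_pos_toReal_rnDeriv hμν, hZ_one]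
    with x hsplit hr h1
  rw [Real.norm_of_nonneg (log_nonneg h1), hsplit]
  have := log_le_sub_one_of_pos (div_pos (one_pos.trans_le h1) hr)
  simp only [Pi.add_apply]
  linarith

end Divergence

section LayerCake

variable {Ω : Type*} [MeasurableSpace Ω] {μ ν : Measure Ω} {Z : Ω → ℝ}

lemma setOf_lt_log_ae_eq (hZ_pos : ∀ᵐ x ∂μ, 0 < Z x) (t : ℝ) :
    {x | t < log (Z x)} =ᵐ[μ] {x | exp t < Z x} := by
  filter_upwards [hZ_pos] with x hx
  exact propext (lt_log_iff_exp_lt hx)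

lemma setOf_lt_neg_log_ae_eq (hZ_pos : ∀ᵐ x ∂μ, 0 < Z x) (t : ℝ) :
    {x | t < -log (Z x)} =ᵐ[μ] {x | Z x < exp (-t)} := by
  filter_upwards [hZ_pos] with x hx
  change (t < -log (Z x)) = (Z x < exp (-t))
  rw [lt_neg, log_lt_iff_lt_exp hx]

lemma lintegral_exp_neg_Ioi_zero : ∫⁻ t in Ioi (0 : ℝ), ENNReal.ofReal (exp (-t)) = 1 := by
  have hint : IntegrableOn (fun t : ℝ ↦ exp (-t)) (Ioi 0) := by
    simpa using exp_neg_integrableOn_Ioi 0 one_pos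
  rw [← ofReal_integral_eq_lintegral_ofReal hint (ae_of_all _ fun t ↦ (exp_pos _).le),
    integral_exp_neg_Ioi_zero, ENNReal.ofReal_one]

theorem ofReal_integral_sub_one_le_lintegral_log [IsProbabilityMeasure ν] (hZm : Measurable Z)
    (hZ : Integrable Z ν) (hZ_one_ν : ∀ᵐ x ∂ν, 1 ≤ Z x) (hZ_one_μ : ∀ᵐ x ∂μ, 1 ≤ Z x)
    (htail : ∀ c, 1 < c → ENNReal.ofReal c * ν {x | c < Z x} ≤ μ {x | c < Z x}) :
    ENNReal.ofReal (∫ x, Z x ∂ν - 1) ≤ ∫⁻ x, ENNReal.ofReal (log (Z x)) ∂μ := by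
  have hlog_nonneg : ∀ {ρ : Measure Ω}, (∀ᵐ x ∂ρ, 1 ≤ Z x) → 0 ≤ᵐ[ρ] fun x ↦ log (Z x) :=
    fun h ↦ h.mono fun x hx ↦ log_nonneg hx
  have hpos : ∀ {ρ : Measure Ω}, (∀ᵐ x ∂ρ, 1 ≤ Z x) → ∀ᵐ x ∂ρ, 0 < Z x :=
    fun h ↦ h.mono fun x hx ↦ one_pos.trans_le hx
  have hlogm : Measurable fun x ↦ log (Z x) := measurable_log.comp hZm
  calc ENNReal.ofReal (∫ x, Z x ∂ν - 1)
      = ∫⁻ x, ENNReal.ofReal (∫ t in (0 : ℝ)..log (Z x), exp t) ∂ν := by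
        have hmean : ∫ x, Z x ∂ν - 1 = ∫ x, (Z x - 1) ∂ν := by
          simp [integral_sub hZ (integrable_const 1)]
        rw [hmean, ofReal_integral_eq_lintegral_ofReal (f := fun x ↦ Z x - 1)
          (hZ.sub (integrable_const 1)) (hZ_one_ν.mono fun x hx ↦ sub_nonneg.mpr hx)]
        refine lintegral_congr_ae ?_
        filter_upwards [hZ_one_ν] with x hx
        rw [integral_exp, exp_zero, exp_log (one_pos.trans_le hx)]
    _ = ∫⁻ t in Ioi 0, ν {x | t < log (Z x)} * ENNReal.ofReal (exp t) :=
        lintegral_comp_eq_lintegral_meas_lt_mul ν (hlog_nonneg hZ_one_ν) hlogm.aemeasurable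
          (fun t _ ↦ continuous_exp.intervalIntegrable 0 t) (ae_of_all _ fun t ↦ (exp_pos t).le)
    _ ≤ ∫⁻ t in Ioi 0, μ {x | t < log (Z x)} := by
        refine setLIntegral_mono' measurableSet_Ioi fun t ht ↦ ?_
        rw [measure_congr (setOf_lt_log_ae_eq (hpos hZ_one_ν) t),
          measure_congr (setOf_lt_log_ae_eq (hpos hZ_one_μ) t), mul_comm]
        exact htail _ (one_lt_exp_iff.mpr ht)
    _ = ∫⁻ x, ENNReal.ofReal (log (Z x)) ∂μ :=
        (lintegral_eq_lintegral_meas_lt μ (hlog_nonneg hZ_one_μ) hlogm.aemeasurable).symm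

lemma measure_lt_exp_neg_eq_add (hZm : Measurable Z) (hZ_nonneg : ∀ x, 0 ≤ Z x) {t : ℝ}
    (ht : 0 < t) :
    ν {x | Z x < exp (-t)} = ν {x | t < -log (Z x)} + ν {x | Z x = 0} := by
  have hunion : {x | Z x < exp (-t)} = {x | t < -log (Z x)} ∪ {x | Z x = 0} := by
    ext x
    rcases (hZ_nonneg x).eq_or_lt with hx | hx
    · simp [← hx, ht.not_gt, exp_pos]
    · simp [hx.ne', lt_neg, log_lt_iff_lt_exp hx]
  have hdisj : Disjoint {x | t < -log (Z x)} {x | Z x = 0} := by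
    refine Set.disjoint_left.mpr fun x hlt hx ↦ ?_
    simp only [mem_ofPred_eq] at hlt hx
    simp [hx, ht.not_gt] at hlt
  rw [hunion, measure_union hdisj (hZm (measurableSet_singleton 0))]

/-- On `{Z = 0}` the junk value `log 0 = 0` breaks `exp (-(-log Z)) = Z`, so that set is split
off. -/
theorem lintegral_ofReal_one_sub_eq (hZm : Measurable Z) (hZ_nonneg : ∀ x, 0 ≤ Z x)
    (hZ_le_one : ∀ x, Z x ≤ 1) :
    ∫⁻ x, ENNReal.ofReal (1 - Z x) ∂ν
      = ∫⁻ t in Ioi 0, ν {x | Z x < exp (-t)} * ENNReal.ofReal (exp (-t)) := by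
  set S := {x | Z x = 0}
  have hS : MeasurableSet S := hZm (measurableSet_singleton 0)
  have hlog_nonneg : ∀ x, 0 ≤ -log (Z x) :=
    fun x ↦ neg_nonneg.mpr (log_nonpos (hZ_nonneg x) (hZ_le_one x))
  have hexp : Measurable fun t : ℝ ↦ ENNReal.ofReal (exp (-t)) := by fun_prop
  have hsplit : ∀ x, ENNReal.ofReal (1 - Z x)
      = ENNReal.ofReal (∫ t in (0 : ℝ)..-log (Z x), exp (-t)) + S.indicator 1 x := by
    intro x
    rw [intervalIntegral.integral_comp_neg (fun t ↦ exp t), integral_exp, neg_zero, exp_zero,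
      neg_neg]
    rcases (hZ_nonneg x).eq_or_lt with hx | hx
    · simp [S, ← hx]
    · simp [S, exp_log hx, hx.ne']
  calc ∫⁻ x, ENNReal.ofReal (1 - Z x) ∂ν
      = ∫⁻ x, ENNReal.ofReal (∫ t in (0 : ℝ)..-log (Z x), exp (-t)) ∂ν + ν S := by
        rw [lintegral_congr hsplit, lintegral_add_right _ (measurable_one.indicator hS),
          lintegral_indicator_one hS]
    _ = (∫⁻ t in Ioi 0, ν {x | t < -log (Z x)} * ENNReal.ofReal (exp (-t)))
          + ν S * ∫⁻ t in Ioi (0 : ℝ), ENNReal.ofReal (exp (-t)) := by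
        rw [lintegral_comp_eq_lintegral_meas_lt_mul ν (ae_of_all _ hlog_nonneg)
          (measurable_log.comp hZm).neg.aemeasurable (g := fun t ↦ exp (-t))
          (fun t _ ↦ (by fun_prop : Continuous fun t : ℝ ↦ exp (-t)).intervalIntegrable 0 t)
          (ae_of_all _ fun t ↦ (exp_pos _).le), lintegral_exp_neg_Ioi_zero, mul_one]
    _ = ∫⁻ t in Ioi 0, (ν {x | t < -log (Z x)} + ν S) * ENNReal.ofReal (exp (-t)) := by
        simp_rw [add_mul]
        rw [lintegral_add_right _ (hexp.const_mul _), lintegral_const_mul _ hexp]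
    _ = ∫⁻ t in Ioi 0, ν {x | Z x < exp (-t)} * ENNReal.ofReal (exp (-t)) :=
        setLIntegral_congr_fun measurableSet_Ioi fun t ht ↦ by
          rw [measure_lt_exp_neg_eq_add hZm hZ_nonneg ht]

theorem lintegral_neg_log_le_ofReal_one_sub_integral [IsProbabilityMeasure ν] (hZm : Measurable Z)
    (hZ_nonneg : ∀ x, 0 ≤ Z x) (hZ_le_one : ∀ x, Z x ≤ 1) (hZ_pos : ∀ᵐ x ∂μ, 0 < Z x)
    (htail : ∀ c, 0 < c → c < 1 → μ {x | Z x < c} ≤ ENNReal.ofReal c * ν {x | Z x < c}) :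
    ∫⁻ x, ENNReal.ofReal (-log (Z x)) ∂μ ≤ ENNReal.ofReal (1 - ∫ x, Z x ∂ν) := by
  have hZ : Integrable Z ν :=
    .of_bound hZm.aestronglyMeasurable 1 (ae_of_all _ fun x ↦ by
      rw [Real.norm_of_nonneg (hZ_nonneg x)]; exact hZ_le_one x)
  calc ∫⁻ x, ENNReal.ofReal (-log (Z x)) ∂μ
      = ∫⁻ t in Ioi 0, μ {x | t < -log (Z x)} :=
        lintegral_eq_lintegral_meas_lt μ
          (ae_of_all _ fun x ↦ neg_nonneg.mpr (log_nonpos (hZ_nonneg x) (hZ_le_one x)))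
          (measurable_log.comp hZm).neg.aemeasurable
    _ ≤ ∫⁻ t in Ioi 0, ν {x | Z x < exp (-t)} * ENNReal.ofReal (exp (-t)) := by
        refine setLIntegral_mono' measurableSet_Ioi fun t ht ↦ ?_
        rw [measure_congr (setOf_lt_neg_log_ae_eq hZ_pos t), mul_comm]
        exact htail _ (exp_pos _) (exp_lt_one_iff.mpr (neg_lt_zero.mpr ht))
    _ = ∫⁻ x, ENNReal.ofReal (1 - Z x) ∂ν :=
        (lintegral_ofReal_one_sub_eq hZm hZ_nonneg hZ_le_one).symm
    _ = ENNReal.ofReal (1 - ∫ x, Z x ∂ν) := by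
        rw [← ofReal_integral_eq_lintegral_ofReal (f := fun x ↦ 1 - Z x)
          ((integrable_const 1).sub hZ) (ae_of_all _ fun x ↦ sub_nonneg.mpr (hZ_le_one x)),
          integral_sub (integrable_const 1) hZ]
        simp

end LayerCake

section GammaBound

variable {Ω : Type*} [MeasurableSpace Ω] {μ ν : Measure Ω} [IsProbabilityMeasure μ]
  [IsProbabilityMeasure ν] {Z : Ω → ℝ}

theorem gammaFn_integral_le_toReal_klDiv_of_tail_gt (hμν : μ ≪ ν) (hKL : klDiv μ ν ≠ ∞)
    (hZm : Measurable Z) (hZ : Integrable Z ν) (hZ_one : ∀ᵐ x ∂ν, 1 ≤ Z x)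
    (htail : ∀ c, 1 < c → ENNReal.ofReal c * ν {x | c < Z x} ≤ μ {x | c < Z x}) :
    gammaFn (∫ x, Z x ∂ν) ≤ (klDiv μ ν).toReal := by
  have hZ_one_μ : ∀ᵐ x ∂μ, 1 ≤ Z x := hμν.ae_le hZ_one
  have hZ_nonneg : 0 ≤ᵐ[ν] Z := hZ_one.mono fun x hx ↦ zero_le_one.trans hx
  have hlog_nonneg : 0 ≤ᵐ[μ] fun x ↦ log (Z x) := hZ_one_μ.mono fun x hx ↦ log_nonneg hx
  have hlog := integrable_log_of_one_le hμν hKL hZ hZ_nonneg hZ_one_μ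
  have hlower : ∫ x, Z x ∂ν - 1 ≤ ∫ x, log (Z x) ∂μ := by
    rw [← ENNReal.ofReal_le_ofReal_iff (integral_nonneg_of_ae hlog_nonneg),
      ofReal_integral_eq_lintegral_ofReal hlog hlog_nonneg]
    exact ofReal_integral_sub_one_le_lintegral_log hZm hZ hZ_one hZ_one_μ htail
  have hDV := integral_log_le_toReal_klDiv_add_log_integral hμν hKL hZ hZ_nonneg
    (hZ_one_μ.mono fun x hx ↦ one_pos.trans_le hx) hlog
  rw [gammaFn]
  linarith

theorem gammaFn_integral_le_toReal_klDiv_of_tail_lt (hμν : μ ≪ ν) (hKL : klDiv μ ν ≠ ∞)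
    (hZm : Measurable Z) (hZ_nonneg : ∀ x, 0 ≤ Z x) (hZ_le_one : ∀ x, Z x ≤ 1)
    (hZ_pos : ∀ᵐ x ∂μ, 0 < Z x)
    (htail : ∀ c, 0 < c → c < 1 → μ {x | Z x < c} ≤ ENNReal.ofReal c * ν {x | Z x < c}) :
    gammaFn (∫ x, Z x ∂ν) ≤ (klDiv μ ν).toReal := by
  have hZ : Integrable Z ν :=
    .of_bound hZm.aestronglyMeasurable 1 (ae_of_all _ fun x ↦ by
      rw [Real.norm_of_nonneg (hZ_nonneg x)]; exact hZ_le_one x)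
  have hmean_le : ∫ x, Z x ∂ν ≤ 1 := by
    simpa using integral_mono hZ (integrable_const 1) hZ_le_one
  have hneg_log_nonneg : 0 ≤ᵐ[μ] fun x ↦ -log (Z x) :=
    ae_of_all _ fun x ↦ neg_nonneg.mpr (log_nonpos (hZ_nonneg x) (hZ_le_one x))
  have hupper := lintegral_neg_log_le_ofReal_one_sub_integral hZm hZ_nonneg hZ_le_one hZ_pos htail
  have hneg_log : Integrable (fun x ↦ -log (Z x)) μ :=
    (lintegral_ofReal_ne_top_iff_integrable
      (measurable_log.comp hZm).neg.aestronglyMeasurable hneg_log_nonneg).mp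
      (ne_top_of_le_ne_top ENNReal.ofReal_ne_top hupper)
  have hlower : ∫ x, Z x ∂ν - 1 ≤ ∫ x, log (Z x) ∂μ := by
    rw [← ofReal_integral_eq_lintegral_ofReal hneg_log hneg_log_nonneg,
      ENNReal.ofReal_le_ofReal_iff (sub_nonneg.mpr hmean_le), integral_neg] at hupper
    linarith
  have hDV := integral_log_le_toReal_klDiv_add_log_integral hμν hKL hZ (ae_of_all _ hZ_nonneg)
    hZ_pos (by simpa using hneg_log.neg)
  rw [gammaFn]
  linarith

end GammaBound

section FinsetSupInf

variable {Ω ι : Type*} [MeasurableSpace Ω] {Q : Measure Ω} {s : Finset ι} {f : ι → Ω → ℝ}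

lemma measurable_sup'_apply (hs : s.Nonempty) (hf : ∀ i, Measurable (f i)) :
    Measurable fun ω ↦ s.sup' hs (f · ω) := by
  convert Finset.measurable_sup' hs fun i _ ↦ hf i using 1
  ext ω
  rw [Finset.sup'_apply]

lemma measurable_inf'_apply (hs : s.Nonempty) (hf : ∀ i, Measurable (f i)) :
    Measurable fun ω ↦ s.inf' hs (f · ω) := by
  convert Finset.inf'_induction hs f (p := Measurable) (fun _ hf _ hg ↦ hf.inf hg) fun i _ ↦ hf i
    using 1
  ext ω
  rw [Finset.inf'_apply]

lemma integrable_sup'_apply (hs : s.Nonempty) (hf : ∀ i, Integrable (f i) Q) :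
    Integrable (fun ω ↦ s.sup' hs (f · ω)) Q := by
  convert Finset.sup'_induction hs f (p := (Integrable · Q)) (fun _ hf _ hg ↦ hf.sup hg)
    fun i _ ↦ hf i using 1
  ext ω
  rw [Finset.sup'_apply]

lemma integrable_inf'_apply (hs : s.Nonempty) (hf : ∀ i, Integrable (f i) Q) :
    Integrable (fun ω ↦ s.inf' hs (f · ω)) Q := by
  convert Finset.inf'_induction hs f (p := (Integrable · Q)) (fun _ hf _ hg ↦ hf.inf hg)
    fun i _ ↦ hf i using 1
  ext ω
  rw [Finset.inf'_apply]

end FinsetSupInf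

section WithDensity

variable {Ω : Type*} [MeasurableSpace Ω] {Q : Measure Ω} {g Y : Ω → ℝ}

lemma withDensity_ofReal_apply [SFinite Q] (hg : Integrable g Q) (hg_nonneg : ∀ ω, 0 ≤ g ω)
    (A : Set Ω) :
    Q.withDensity (fun ω ↦ ENNReal.ofReal (g ω)) A = ENNReal.ofReal (∫ ω in A, g ω ∂Q) := by
  rw [withDensity_apply', ofReal_integral_eq_lintegral_ofReal hg.integrableOn
    (ae_of_all _ hg_nonneg)]

lemma isProbabilityMeasure_withDensity_ofReal [SFinite Q] (hg : Integrable g Q)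
    (hg_nonneg : ∀ ω, 0 ≤ g ω) (hg_one : ∫ ω, g ω ∂Q = 1) :
    IsProbabilityMeasure (Q.withDensity fun ω ↦ ENNReal.ofReal (g ω)) :=
  ⟨by rw [withDensity_ofReal_apply hg hg_nonneg, setIntegral_univ, hg_one, ENNReal.ofReal_one]⟩

lemma ae_pos_withDensity_ofReal (hg : Measurable g) :
    ∀ᵐ ω ∂Q.withDensity (fun ω ↦ ENNReal.ofReal (g ω)), 0 < g ω :=
  (ae_withDensity_iff hg.ennreal_ofReal).mpr
    (ae_of_all _ fun _ h ↦ ENNReal.ofReal_pos.mp (pos_iff_ne_zero.mpr h))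

lemma toReal_ofReal_smul_div_ae_eq (hg_nonneg : ∀ ω, 0 ≤ g ω)
    (hY_zero : ∀ᵐ ω ∂Q, g ω = 0 → Y ω = 0) :
    (fun ω ↦ (ENNReal.ofReal (g ω)).toReal • (Y ω / g ω)) =ᵐ[Q] Y := by
  filter_upwards [hY_zero] with ω hω
  rw [ENNReal.toReal_ofReal (hg_nonneg ω), smul_eq_mul]
  rcases (hg_nonneg ω).eq_or_lt with h | h
  · simp [← h, hω h.symm]
  · exact mul_div_cancel₀ _ h.ne'

lemma integrable_div_withDensity_ofReal (hg : Measurable g) (hg_nonneg : ∀ ω, 0 ≤ g ω)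
    (hY : Integrable Y Q) (hY_zero : ∀ᵐ ω ∂Q, g ω = 0 → Y ω = 0) :
    Integrable (fun ω ↦ Y ω / g ω) (Q.withDensity fun ω ↦ ENNReal.ofReal (g ω)) :=
  (integrable_withDensity_iff_integrable_smul' hg.ennreal_ofReal
    (ae_of_all _ fun _ ↦ ENNReal.ofReal_lt_top)).mpr
    (hY.congr (toReal_ofReal_smul_div_ae_eq hg_nonneg hY_zero).symm)

lemma integral_div_withDensity_ofReal (hg : Measurable g) (hg_nonneg : ∀ ω, 0 ≤ g ω)
    (hY_zero : ∀ᵐ ω ∂Q, g ω = 0 → Y ω = 0) :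
    ∫ ω, Y ω / g ω ∂(Q.withDensity fun ω ↦ ENNReal.ofReal (g ω)) = ∫ ω, Y ω ∂Q := by
  rw [integral_withDensity_eq_integral_toReal_smul hg.ennreal_ofReal
    (ae_of_all _ fun _ ↦ ENNReal.ofReal_lt_top)]
  exact integral_congr_ae (toReal_ofReal_smul_div_ae_eq hg_nonneg hY_zero)

end WithDensity

namespace MeasureTheory

variable {Ω : Type*} [mΩ : MeasurableSpace Ω] {Q : Measure Ω} {ℱ : Filtration ℕ mΩ}
  {X : ℕ → Ω → ℝ} {T : Ω → ℝ} {m n : ℕ}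

lemma Martingale.measurable (hX : Martingale X ℱ Q) (j : ℕ) : Measurable (X j) :=
  ((hX.stronglyAdapted j).mono (ℱ.le j)).measurable

variable [IsFiniteMeasure Q]

theorem Martingale.ae_eq_zero_of_eq_zero (hX : Martingale X ℱ Q) (hX_nonneg : ∀ j ω, 0 ≤ X j ω)
    {i j : ℕ} (hij : i ≤ j) : ∀ᵐ ω ∂Q, X i ω = 0 → X j ω = 0 := by
  have hs : MeasurableSet[ℱ i] {ω | X i ω = 0} :=
    (hX.stronglyAdapted i).measurable (measurableSet_singleton 0)
  have hzero : ∫ ω in {ω | X i ω = 0}, X j ω ∂Q = 0 := by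
    rw [← hX.setIntegral_eq hij hs]
    exact setIntegral_eq_zero_of_forall_eq_zero fun ω hω ↦ hω
  rw [setIntegral_eq_zero_iff_of_nonneg_ae (ae_of_all _ (hX_nonneg j))
    (hX.integrable j).integrableOn] at hzero
  exact (ae_restrict_iff' (ℱ.le i _ hs)).mp hzero

theorem Martingale.integral_stoppedValue_eq (hX : Martingale X ℱ Q) {τ : Ω → ℕ∞}
    (hτ : IsStoppingTime ℱ τ) (hτ_le : ∀ ω, τ ω ≤ n) :
    ∫ ω, stoppedValue X τ ω ∂Q = ∫ ω, X n ω ∂Q := by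
  rw [integral_congr_ae (hX.stoppedValue_ae_eq_condExp_of_le_const hτ hτ_le),
    integral_condExp hτ.measurableSpace_le]

/-- `τ` is the first time in `[m, n]` at which `X j - T ∈ s` (or `n` if there is none); it is a
stopping time because `T` is `ℱ m`-measurable. -/
theorem Martingale.exists_setIntegral_hitting_eq (hX : Martingale X ℱ Q)
    (hT : StronglyMeasurable[ℱ m] T) {s : Set ℝ} (hs : MeasurableSet s) (hmn : m ≤ n) :
    ∃ τ : Ω → ℕ, (∀ ω, (∃ j ∈ Icc m n, X j ω - T ω ∈ s) → X (τ ω) ω - T ω ∈ s) ∧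
      Integrable (fun ω ↦ X (τ ω) ω) Q ∧
      ∫ ω in {ω | ∃ j ∈ Icc m n, X j ω - T ω ∈ s}, X (τ ω) ω ∂Q
        = ∫ ω in {ω | ∃ j ∈ Icc m n, X j ω - T ω ∈ s}, X n ω ∂Q := by
  classical
  set Y : ℕ → Ω → ℝ := fun j ↦ X j - if m ≤ j then T else 0
  have hY : Adapted ℱ Y := by
    intro j
    by_cases hj : m ≤ j
    · simpa [Y, hj] using (hX.stronglyAdapted j).measurable.sub (hT.mono (ℱ.mono hj)).measurable
    · simpa [Y, hj] using (hX.stronglyAdapted j).measurable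
  have hYX : ∀ j ∈ Icc m n, Y j = X j - T := fun j hj ↦ by simp [Y, hj.1]
  set A := {ω | ∃ j ∈ Icc m n, X j ω - T ω ∈ s}
  have hA : ∀ ω, ω ∈ A ↔ ∃ j ∈ Icc m n, Y j ω ∈ s := fun ω ↦ by
    refine exists_congr fun j ↦ and_congr_right fun hj ↦ ?_
    rw [hYX j hj, Pi.sub_apply]
  set τ := hittingBtwn Y s m n
  have hτ : IsStoppingTime ℱ fun ω ↦ (τ ω : ℕ∞) := hY.isStoppingTime_hittingBtwn hs
  have hτ_mem : ∀ ω, τ ω ∈ Icc m n := fun ω ↦ ⟨le_hittingBtwn hmn ω, hittingBtwn_le ω⟩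
  have hτ_le : ∀ ω, (τ ω : ℕ∞) ≤ n := fun ω ↦ Nat.cast_le.mpr (hτ_mem ω).2
  have hint : Integrable (fun ω ↦ X (τ ω) ω) Q := integrable_stoppedValue ℕ hτ hX.integrable hτ_le
  refine ⟨τ, fun ω hω ↦ ?_, hint, ?_⟩
  · have := hittingBtwn_mem_set ((hA ω).mp hω)
    rwa [hYX _ (hτ_mem ω)] at this
  · have hoff : ∀ ω ∉ A, X (τ ω) ω - X n ω = 0 := fun ω hω ↦ by
      rw [show τ ω = n from if_neg ((hA ω).not.mp hω), sub_self]
    rw [← sub_eq_zero, ← integral_sub hint.integrableOn (hX.integrable n).integrableOn,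
      setIntegral_eq_integral_of_forall_compl_eq_zero hoff, integral_sub hint (hX.integrable n),
      sub_eq_zero]
    exact hX.integral_stoppedValue_eq hτ hτ_le

theorem Martingale.setIntegral_le_of_lt_sup' (hX : Martingale X ℱ Q)
    (hT : StronglyMeasurable[ℱ m] T) (hT_int : Integrable T Q) (hmn : m ≤ n) :
    ∫ ω in {ω | T ω < (Finset.Icc m n).sup' (Finset.nonempty_Icc.2 hmn) (X · ω)}, T ω ∂Q
      ≤ ∫ ω in {ω | T ω < (Finset.Icc m n).sup' (Finset.nonempty_Icc.2 hmn) (X · ω)}, X n ω ∂Q := by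
  obtain ⟨τ, hmem, hint, heq⟩ := hX.exists_setIntegral_hitting_eq hT measurableSet_Ioi hmn
  have hAm := measurableSet_lt (hT.mono (ℱ.le m)).measurable
    (measurable_sup'_apply (Finset.nonempty_Icc.2 hmn) hX.measurable)
  have hA : {ω | T ω < (Finset.Icc m n).sup' (Finset.nonempty_Icc.2 hmn) (X · ω)}
      = {ω | ∃ j ∈ Icc m n, X j ω - T ω ∈ Ioi 0} := by
    ext ω
    simp [Finset.lt_sup'_iff]
  rw [hA] at hAm ⊢
  rw [← heq]
  exact setIntegral_mono_on hT_int.integrableOn hint.integrableOn hAm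
    fun ω hω ↦ (sub_pos.mp (hmem ω hω)).le

theorem Martingale.setIntegral_le_of_inf'_lt (hX : Martingale X ℱ Q)
    (hT : StronglyMeasurable[ℱ m] T) (hT_int : Integrable T Q) (hmn : m ≤ n) :
    ∫ ω in {ω | (Finset.Icc m n).inf' (Finset.nonempty_Icc.2 hmn) (X · ω) < T ω}, X n ω ∂Q
      ≤ ∫ ω in {ω | (Finset.Icc m n).inf' (Finset.nonempty_Icc.2 hmn) (X · ω) < T ω}, T ω ∂Q := by
  obtain ⟨τ, hmem, hint, heq⟩ := hX.exists_setIntegral_hitting_eq hT measurableSet_Iio hmn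
  have hAm := measurableSet_lt
    (measurable_inf'_apply (Finset.nonempty_Icc.2 hmn) hX.measurable) (hT.mono (ℱ.le m)).measurable
  have hA : {ω | (Finset.Icc m n).inf' (Finset.nonempty_Icc.2 hmn) (X · ω) < T ω}
      = {ω | ∃ j ∈ Icc m n, X j ω - T ω ∈ Iio 0} := by
    ext ω
    simp [Finset.inf'_lt_iff]
  rw [hA] at hAm ⊢
  rw [← heq]
  exact setIntegral_mono_on hint.integrableOn hT_int.integrableOn hAm
    fun ω hω ↦ (sub_neg.mp (hmem ω hω)).le

theorem Martingale.ofReal_mul_withDensity_le (hX : Martingale X ℱ Q)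
    (hX_nonneg : ∀ j ω, 0 ≤ X j ω) (hmn : m ≤ n) {c : ℝ} (hc : 0 ≤ c) :
    ENNReal.ofReal c * Q.withDensity (fun ω ↦ ENNReal.ofReal (X m ω))
        {ω | c * X m ω < (Finset.Icc m n).sup' (Finset.nonempty_Icc.2 hmn) (X · ω)}
      ≤ Q.withDensity (fun ω ↦ ENNReal.ofReal (X n ω))
        {ω | c * X m ω < (Finset.Icc m n).sup' (Finset.nonempty_Icc.2 hmn) (X · ω)} := by
  rw [withDensity_ofReal_apply (hX.integrable m) (hX_nonneg m),
    withDensity_ofReal_apply (hX.integrable n) (hX_nonneg n), ← ENNReal.ofReal_mul hc,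
    ← integral_const_mul]
  exact ENNReal.ofReal_le_ofReal (hX.setIntegral_le_of_lt_sup'
    ((hX.stronglyAdapted m).const_mul c) ((hX.integrable m).const_mul c) hmn)

theorem Martingale.withDensity_le_ofReal_mul (hX : Martingale X ℱ Q)
    (hX_nonneg : ∀ j ω, 0 ≤ X j ω) (hmn : m ≤ n) {c : ℝ} (hc : 0 ≤ c) :
    Q.withDensity (fun ω ↦ ENNReal.ofReal (X n ω))
        {ω | (Finset.Icc m n).inf' (Finset.nonempty_Icc.2 hmn) (X · ω) < c * X m ω}
      ≤ ENNReal.ofReal c * Q.withDensity (fun ω ↦ ENNReal.ofReal (X m ω))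
        {ω | (Finset.Icc m n).inf' (Finset.nonempty_Icc.2 hmn) (X · ω) < c * X m ω} := by
  rw [withDensity_ofReal_apply (hX.integrable m) (hX_nonneg m),
    withDensity_ofReal_apply (hX.integrable n) (hX_nonneg n), ← ENNReal.ofReal_mul hc,
    ← integral_const_mul]
  exact ENNReal.ofReal_le_ofReal (hX.setIntegral_le_of_inf'_lt
    ((hX.stronglyAdapted m).const_mul c) ((hX.integrable m).const_mul c) hmn)

theorem Martingale.gammaFn_integral_sup'_le (hX : Martingale X ℱ Q)
    (hX_nonneg : ∀ j ω, 0 ≤ X j ω) (hmn : m ≤ n)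
    [IsProbabilityMeasure (Q.withDensity fun ω ↦ ENNReal.ofReal (X m ω))]
    [IsProbabilityMeasure (Q.withDensity fun ω ↦ ENNReal.ofReal (X n ω))]
    (hKL : klDiv (Q.withDensity fun ω ↦ ENNReal.ofReal (X n ω))
      (Q.withDensity fun ω ↦ ENNReal.ofReal (X m ω)) ≠ ∞) :
    gammaFn (∫ ω, (Finset.Icc m n).sup' (Finset.nonempty_Icc.2 hmn) (X · ω) ∂Q)
      ≤ (klDiv (Q.withDensity fun ω ↦ ENNReal.ofReal (X n ω))
          (Q.withDensity fun ω ↦ ENNReal.ofReal (X m ω))).toReal := by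
  set Xmax := fun ω ↦ (Finset.Icc m n).sup' (Finset.nonempty_Icc.2 hmn) (X · ω)
  have hm_le : ∀ ω, X m ω ≤ Xmax ω := fun ω ↦ Finset.le_sup' (X · ω) (Finset.left_mem_Icc.2 hmn)
  have hzero : ∀ᵐ ω ∂Q, X m ω = 0 → Xmax ω = 0 := by
    filter_upwards [(Filter.eventually_all_finset _).2 fun j hj ↦
      hX.ae_eq_zero_of_eq_zero hX_nonneg (Finset.mem_Icc.1 hj).1] with ω h h0
    exact le_antisymm (Finset.sup'_le _ _ fun j hj ↦ (h j hj h0).le) (h0 ▸ hm_le ω)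
  have hac := (klDiv_ne_top_iff.mp hKL).1
  have hpos_m := ae_pos_withDensity_ofReal (Q := Q) (hX.measurable m)
  have hset : ∀ {ρ : Measure Ω}, (∀ᵐ ω ∂ρ, 0 < X m ω) → ∀ c,
      {ω | c < Xmax ω / X m ω} =ᵐ[ρ] {ω | c * X m ω < Xmax ω} := fun h c ↦ by
    filter_upwards [h] with ω hω
    exact propext (lt_div_iff₀ hω)
  rw [← integral_div_withDensity_ofReal (hX.measurable m) (hX_nonneg m) hzero]
  refine gammaFn_integral_le_toReal_klDiv_of_tail_gt hac hKL
    ((measurable_sup'_apply _ hX.measurable).div (hX.measurable m))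
    (integrable_div_withDensity_ofReal (hX.measurable m) (hX_nonneg m)
      (integrable_sup'_apply _ hX.integrable) hzero) ?_ fun c hc ↦ ?_
  · filter_upwards [hpos_m] with ω hω using (one_le_div hω).2 (hm_le ω)
  · rw [measure_congr (hset hpos_m c), measure_congr (hset (hac.ae_le hpos_m) c)]
    exact hX.ofReal_mul_withDensity_le hX_nonneg hmn (zero_le_one.trans hc.le)

theorem Martingale.gammaFn_integral_inf'_le (hX : Martingale X ℱ Q)
    (hX_nonneg : ∀ j ω, 0 ≤ X j ω) (hmn : m ≤ n)
    [IsProbabilityMeasure (Q.withDensity fun ω ↦ ENNReal.ofReal (X m ω))]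
    [IsProbabilityMeasure (Q.withDensity fun ω ↦ ENNReal.ofReal (X n ω))]
    (hKL : klDiv (Q.withDensity fun ω ↦ ENNReal.ofReal (X n ω))
      (Q.withDensity fun ω ↦ ENNReal.ofReal (X m ω)) ≠ ∞) :
    gammaFn (∫ ω, (Finset.Icc m n).inf' (Finset.nonempty_Icc.2 hmn) (X · ω) ∂Q)
      ≤ (klDiv (Q.withDensity fun ω ↦ ENNReal.ofReal (X n ω))
          (Q.withDensity fun ω ↦ ENNReal.ofReal (X m ω))).toReal := by
  set Xmin := fun ω ↦ (Finset.Icc m n).inf' (Finset.nonempty_Icc.2 hmn) (X · ω)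
  have hle_m : ∀ ω, Xmin ω ≤ X m ω := fun ω ↦ Finset.inf'_le (X · ω) (Finset.left_mem_Icc.2 hmn)
  have hmin_nonneg : ∀ ω, 0 ≤ Xmin ω := fun ω ↦ Finset.le_inf' _ _ fun j _ ↦ hX_nonneg j ω
  have hzero : ∀ᵐ ω ∂Q, X m ω = 0 → Xmin ω = 0 :=
    ae_of_all _ fun ω h0 ↦ le_antisymm (h0 ▸ hle_m ω) (hmin_nonneg ω)
  have hac := (klDiv_ne_top_iff.mp hKL).1
  have hpos_m := ae_pos_withDensity_ofReal (Q := Q) (hX.measurable m)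
  -- a non-negative martingale stays at `0`, so under `Pₙ` no `Xⱼ` with `j ≤ n` vanishes
  have hpos_n : ∀ᵐ ω ∂Q.withDensity (fun ω ↦ ENNReal.ofReal (X n ω)), ∀ j ∈ Finset.Icc m n,
      0 < X j ω := by
    filter_upwards [ae_pos_withDensity_ofReal (Q := Q) (hX.measurable n),
      withDensity_absolutelyContinuous _ _ |>.ae_le <| (Filter.eventually_all_finset _).2
        fun j hj ↦ hX.ae_eq_zero_of_eq_zero hX_nonneg (Finset.mem_Icc.1 hj).2] with ω hn h j hj
    exact (hX_nonneg j ω).lt_of_ne fun h0 ↦ hn.ne' (h j hj h0.symm)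
  have hset : ∀ {ρ : Measure Ω}, (∀ᵐ ω ∂ρ, 0 < X m ω) → ∀ c,
      {ω | Xmin ω / X m ω < c} =ᵐ[ρ] {ω | Xmin ω < c * X m ω} := fun h c ↦ by
    filter_upwards [h] with ω hω
    exact propext (div_lt_iff₀ hω)
  rw [← integral_div_withDensity_ofReal (hX.measurable m) (hX_nonneg m) hzero]
  refine gammaFn_integral_le_toReal_klDiv_of_tail_lt hac hKL
    ((measurable_inf'_apply _ hX.measurable).div (hX.measurable m))
    (fun ω ↦ div_nonneg (hmin_nonneg ω) (hX_nonneg m ω))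
    (fun ω ↦ div_le_one_of_le₀ (hle_m ω) (hX_nonneg m ω)) ?_ fun c hc _ ↦ ?_
  · filter_upwards [hpos_n] with ω h
    exact div_pos ((Finset.lt_inf'_iff _).2 h) (h m (Finset.left_mem_Icc.2 hmn))
  · rw [measure_congr (hset hpos_m c), measure_congr (hset (hac.ae_le hpos_m) c)]
    exact hX.withDensity_le_ofReal_mul hX_nonneg hmn hc.le

end MeasureTheory

theorem martingale_maximal_divergence_bound_general
    {Ω : Type*} [mΩ : MeasurableSpace Ω] (Q : Measure Ω) [IsProbabilityMeasure Q]
    (ℱ : Filtration ℕ mΩ) (X : ℕ → Ω → ℝ)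
    (hmart : Martingale X ℱ Q)
    (hnonneg : ∀ j, ∀ ω, 0 ≤ X j ω)
    (m n : ℕ) (hmn : m ≤ n)
    (hXn : ∫ ω, X n ω ∂Q = 1) :
    ENNReal.ofReal (gammaFn (∫ ω,
        (Finset.Icc m n).sup' (Finset.nonempty_Icc.mpr hmn) (fun j => X j ω) ∂Q))
      ≤ infoDiv (Q.withDensity fun ω => ENNReal.ofReal (X n ω))
          (Q.withDensity fun ω => ENNReal.ofReal (X m ω)) ∧
    ENNReal.ofReal (gammaFn (∫ ω,
        (Finset.Icc m n).inf' (Finset.nonempty_Icc.mpr hmn) (fun j => X j ω) ∂Q))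
      ≤ infoDiv (Q.withDensity fun ω => ENNReal.ofReal (X n ω))
          (Q.withDensity fun ω => ENNReal.ofReal (X m ω)) := by
  have hXm : ∫ ω, X m ω ∂Q = 1 := by
    rw [← setIntegral_univ, hmart.setIntegral_eq hmn MeasurableSet.univ, setIntegral_univ, hXn]
  have := isProbabilityMeasure_withDensity_ofReal (hmart.integrable m) (hnonneg m) hXm
  have := isProbabilityMeasure_withDensity_ofReal (hmart.integrable n) (hnonneg n) hXn
  rw [infoDiv_eq_klDiv]
  by_cases hKL : klDiv (Q.withDensity fun ω ↦ ENNReal.ofReal (X n ω))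
    (Q.withDensity fun ω ↦ ENNReal.ofReal (X m ω)) = ∞
  · simp [hKL]
  exact ⟨ENNReal.ofReal_le_of_le_toReal (hmart.gammaFn_integral_sup'_le hnonneg hmn hKL),
    ENNReal.ofReal_le_of_le_toReal (hmart.gammaFn_integral_inf'_le hnonneg hmn hKL)⟩

/-- For a non-negative martingale `(Xⱼ)` with `E[Xₙ] = 1` under a probability
measure `Q`, with `Pⱼ := Q.withDensity Xⱼ`, one has
`γ(E[max_{m ≤ j ≤ n} Xⱼ]) ≤ D(Pₙ‖Pₘ)` and `γ(E[min_{m ≤ j ≤ n} Xⱼ]) ≤ D(Pₙ‖Pₘ)`. -/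
theorem martingale_maximal_divergence_bound
    {Ω : Type*} [mΩ : MeasurableSpace Ω] (Q : Measure Ω) [IsProbabilityMeasure Q]
    (ℱ : Filtration ℕ mΩ) (X : ℕ → Ω → ℝ)
    (hmart : Martingale X ℱ Q)
    (hnonneg : ∀ j, ∀ ω, 0 ≤ X j ω)
    (m n : ℕ) (hm : 1 ≤ m) (hmn : m ≤ n)
    (hXn : ∫ ω, X n ω ∂Q = 1) :
    ENNReal.ofReal (gammaFn (∫ ω,
        (Finset.Icc m n).sup' (Finset.nonempty_Icc.mpr hmn) (fun j => X j ω) ∂Q))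
      ≤ infoDiv (Q.withDensity fun ω => ENNReal.ofReal (X n ω))
          (Q.withDensity fun ω => ENNReal.ofReal (X m ω)) ∧
    ENNReal.ofReal (gammaFn (∫ ω,
        (Finset.Icc m n).inf' (Finset.nonempty_Icc.mpr hmn) (fun j => X j ω) ∂Q))
      ≤ infoDiv (Q.withDensity fun ω => ENNReal.ofReal (X n ω))
          (Q.withDensity fun ω => ENNReal.ofReal (X m ω)) :=
  martingale_maximal_divergence_bound_general (mΩ := mΩ) Q ℱ X hmart hnonneg m n hmn hXn
end

section
/- Let ν be a finite measure on (Ω, 𝒜) and let μ = ν.withDensity ρ be a finite measure with D(μ‖ν) < ∞ and total mass k := μ(Ω) > 0. Let F_1 ⊆ F_2 ⊆ ⋯ ⊆ F_n be sub-σ-algebras of 𝒜, let Y_j be a conditional density of μ given F_j with respect to ν, set μ_j := ν.withDensity Y_j, and for 1 ≤ m ≤ n set Y_{m,n}^max := max_{m ≤ j ≤ n} Y_j and Y_{m,n}^min := min_{m ≤ j ≤ n} Y_j. Then d(k ‖ ∫ Y_{m,n}^max dν) ≤ D(μ_n‖μ_m) and d(k ‖ ∫ Y_{m,n}^min dν)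 ≤ D(μ_n‖μ_m), where d(a‖b) := a·ln(a/b) − (a − b) for a, b > 0. -/
open MeasureTheory Filter Topology ENNReal

/-- The scalar divergence `d(a‖b) = a·ln(a/b) − (a − b)` of two positive reals. -/
noncomputable def scalarDiv (a b : ℝ) : ℝ := a * Real.log (a / b) - (a - b)

/-!
Write `φ = klFun`, so that `D(μₙ‖μₘ) = ∫ Yₘ φ(Yₙ/Yₘ) dν`. Integrating the Fenchel–Young
inequality `a log (c/b) + b ≤ b φ(a/b) + c` with `a = Yₙ`, `b = Yₘ`, `c = t·Y^max`
(resp. `c = t·Y^min`) and choosing the scale `t = k / ∫ Y^max dν` (resp. `t = k / ∫ Y^min dν`)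
reduces both bounds to Doob-type inequalities for the running maximum and minimum of the
density martingale `(Yⱼ)`:
`∫ Y^max dν ≤ ∫ log (Y^max/Yₘ) dμ + k` and `∫ log (Yₘ/Y^min) dμ + ∫ Y^min dν ≤ k`.
These are proved by induction on the upper index `p`: the increment `log (M_{p+1}/M_p)` of the
running extremum is `F_{p+1}`-measurable, so its `μ`-integral is its integral against
`Y_{p+1} dν`; where the extremum moves, it moves to `Y_{p+1}`, and `log x ≤ x - 1` closes the step.
-/

open InformationTheory

lemma sub_le_mul_log_div {a b : ℝ} (ha : 0 < a) (hb : 0 < b) : a - b ≤ a * Real.log (a / b) := by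
  have h := Real.one_sub_inv_le_log_of_pos (div_pos ha hb)
  rw [inv_div] at h
  have := mul_le_mul_of_nonneg_left h ha.le
  rwa [mul_sub, mul_one, mul_div_cancel₀ _ ha.ne'] at this

lemma mul_log_div_le_sub {a b : ℝ} (ha : 0 ≤ a) (hb : 0 < b) : a * Real.log (b / a) ≤ b - a := by
  rcases ha.eq_or_lt with rfl | ha
  · simpa using hb.le
  · have := sub_le_mul_log_div ha hb
    rw [← inv_div, Real.log_inv] at this
    linarith

lemma mul_log_div_add_le_mul_klFun_add {a b c : ℝ} (ha : 0 ≤ a) (hb : 0 ≤ b) (hc : 0 < c)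
    (hab : b = 0 → a = 0) : a * Real.log (c / b) + b ≤ b * klFun (a / b) + c := by
  rcases hb.eq_or_lt with rfl | hb
  · simp [hab rfl, hc.le]
  rcases ha.eq_or_lt with rfl | ha
  · simp [klFun_zero, hc.le]
  have hsplit : Real.log (c / b) = Real.log (c / a) + Real.log (a / b) := by
    rw [Real.log_div hc.ne' hb.ne', Real.log_div hc.ne' ha.ne', Real.log_div ha.ne' hb.ne']
    ring
  have hkl : b * klFun (a / b) = a * Real.log (a / b) + b - a := by
    rw [klFun, Real.log_div ha.ne' hb.ne']
    field_simp
  rw [hsplit, hkl, mul_add]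
  linarith [mul_log_div_le_sub ha.le hc]

/-- `logRatio u v = log⁺ (u / v)`, computed on real parts (so it is `0` when `u` or `v` is `0`
or `∞`). -/
noncomputable def logRatio (u v : ℝ≥0∞) : ℝ≥0∞ := ENNReal.ofReal (Real.log (u.toReal / v.toReal))

@[simp]
lemma logRatio_self (u : ℝ≥0∞) : logRatio u u = 0 := by
  rcases eq_or_ne u.toReal 0 with h | h <;> simp [logRatio, h]

@[fun_prop]
lemma Measurable.logRatio {α : Type*} {_ : MeasurableSpace α} {f g : α → ℝ≥0∞}
    (hf : Measurable f) (hg : Measurable g) : Measurable fun x ↦ logRatio (f x) (g x) := by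
  unfold _root_.logRatio; fun_prop

lemma logRatio_add {u v w : ℝ≥0∞} (hv : 0 < v) (hvu : v ≤ u) (huw : u ≤ w) (hw : w ≠ ∞) :
    logRatio w v = logRatio w u + logRatio u v := by
  have hu : u ≠ ∞ := ne_top_of_le_ne_top hw huw
  have hv' : 0 < v.toReal := ENNReal.toReal_pos hv.ne' (ne_top_of_le_ne_top hu hvu)
  have hvu' : v.toReal ≤ u.toReal := ENNReal.toReal_mono hu hvu
  have huw' : u.toReal ≤ w.toReal := ENNReal.toReal_mono hw huw
  have hu' : 0 < u.toReal := hv'.trans_le hvu'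
  have hw' : 0 < w.toReal := hu'.trans_le huw'
  unfold logRatio
  rw [← ENNReal.ofReal_add (Real.log_nonneg ((one_le_div hu').2 huw'))
    (Real.log_nonneg ((one_le_div hv').2 hvu')), ← Real.log_mul (by positivity) (by positivity),
    div_mul_div_cancel₀ hu'.ne']

lemma le_mul_logRatio_add {u v : ℝ≥0∞} (hv : 0 < v) (hvu : v ≤ u) (hu : u ≠ ∞) :
    u ≤ u * logRatio u v + v := by
  have hv' : 0 < v.toReal := ENNReal.toReal_pos hv.ne' (ne_top_of_le_ne_top hu hvu)
  have hu' : 0 < u.toReal := hv'.trans_le (ENNReal.toReal_mono hu hvu)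
  have hlog : 0 ≤ Real.log (u.toReal / v.toReal) :=
    Real.log_nonneg ((one_le_div hv').2 (ENNReal.toReal_mono hu hvu))
  rw [logRatio, ← ENNReal.ofReal_toReal hu, ← ENNReal.ofReal_toReal (ne_top_of_le_ne_top hu hvu),
    ENNReal.toReal_ofReal hu'.le, ENNReal.toReal_ofReal hv'.le, ← ENNReal.ofReal_mul hu'.le,
    ← ENNReal.ofReal_add (mul_nonneg hu'.le hlog) hv'.le]
  exact ENNReal.ofReal_le_ofReal (by linarith [sub_le_mul_log_div hu' hv'])

lemma mul_logRatio_add_le {u v : ℝ≥0∞} (huv : u ≤ v) (hv : v ≠ ∞) :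
    u * logRatio v u + u ≤ v := by
  have hu : u ≠ ∞ := ne_top_of_le_ne_top hv huv
  rcases eq_or_ne u 0 with rfl | hu0
  · simp
  have hu' : 0 < u.toReal := ENNReal.toReal_pos hu0 hu
  have huv' : u.toReal ≤ v.toReal := ENNReal.toReal_mono hv huv
  have hlog : 0 ≤ Real.log (v.toReal / u.toReal) := Real.log_nonneg ((one_le_div hu').2 huv')
  rw [logRatio, ← ENNReal.ofReal_toReal hv, ← ENNReal.ofReal_toReal hu,
    ENNReal.toReal_ofReal hu'.le, ENNReal.toReal_ofReal (hu'.le.trans huv'),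
    ← ENNReal.ofReal_mul hu'.le, ← ENNReal.ofReal_add (mul_nonneg hu'.le hlog) hu'.le]
  exact ENNReal.ofReal_le_ofReal (by linarith [mul_log_div_le_sub hu'.le (hu'.trans_le huv')])

lemma sup_le_mul_logRatio_add {y v : ℝ≥0∞} (hy : y ≠ ∞) (hv : v = 0 → y = 0) :
    y ⊔ v ≤ y * logRatio (y ⊔ v) v + v := by
  rcases le_total y v with hyv | hvy
  · rw [sup_eq_right.2 hyv]; exact le_add_self
  rcases eq_or_ne v 0 with rfl | hv0
  · simp [hv rfl]
  rw [sup_eq_left.2 hvy]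
  exact le_mul_logRatio_add (pos_iff_ne_zero.2 hv0) hvy hy

lemma mul_logRatio_inf_add_inf_le {y v : ℝ≥0∞} (hv : v ≠ ∞) :
    y * logRatio v (v ⊓ y) + v ⊓ y ≤ v := by
  rcases le_total v y with hvy | hyv
  · simp [inf_eq_left.2 hvy]
  rw [inf_eq_right.2 hyv]
  exact mul_logRatio_add_le hyv hv

lemma exists_ofReal_of_ne_top {a : ℝ≥0∞} (ha : a ≠ ∞) : ∃ r : ℝ, 0 ≤ r ∧ a = ENNReal.ofReal r :=
  ⟨a.toReal, ENNReal.toReal_nonneg, (ENNReal.ofReal_toReal ha).symm⟩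

lemma mul_logRatio_add_le_mul_klFun_add {a b M : ℝ≥0∞} (ha_top : a ≠ ∞) (hb_top : b ≠ ∞)
    (hM_top : M ≠ ∞) (haM : a ≤ M) (hbM : b ≤ M) (hab : b = 0 → a = 0) {t : ℝ} (ht0 : 0 < t)
    (ht1 : t ≤ 1) :
    a * logRatio M b + b ≤
      b * ENNReal.ofReal (klFun (a / b).toReal) +
        (ENNReal.ofReal t * M + a * ENNReal.ofReal (Real.log t⁻¹)) := by
  rcases eq_or_ne a 0 with rfl | ha0
  · simp [klFun_zero]
  have hb0 : b ≠ 0 := fun h ↦ ha0 (hab h)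
  obtain ⟨a, ha, rfl⟩ := exists_ofReal_of_ne_top ha_top
  obtain ⟨b, hb, rfl⟩ := exists_ofReal_of_ne_top hb_top
  obtain ⟨M, hM, rfl⟩ := exists_ofReal_of_ne_top hM_top
  rw [ENNReal.ofReal_le_ofReal_iff hM] at haM hbM
  have ha' : 0 < a := by simpa using ha0
  have hb' : 0 < b := by simpa using hb0
  have hlogM : 0 ≤ Real.log (M / b) := Real.log_nonneg ((one_le_div hb').2 hbM)
  have hlogt : 0 ≤ Real.log t⁻¹ := Real.log_nonneg (one_le_inv_iff₀.2 ⟨ht0, ht1⟩)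
  have key := mul_log_div_add_le_mul_klFun_add ha hb (mul_pos ht0 (ha'.trans_le haM))
    fun h ↦ absurd h hb'.ne'
  rw [mul_div_assoc, Real.log_mul ht0.ne' (div_pos (ha'.trans_le haM) hb').ne',
    ← neg_neg (Real.log t), ← Real.log_inv] at key
  simp only [logRatio, ← ENNReal.ofReal_div_of_pos hb', ENNReal.toReal_ofReal, ha, hb, hM,
    div_nonneg, ← ENNReal.ofReal_mul, ht0.le]
  rw [← ENNReal.ofReal_add (mul_nonneg ha hlogM) hb, ← ENNReal.ofReal_add (by positivity)
    (mul_nonneg ha hlogt), ← ENNReal.ofReal_add (mul_nonneg hb (klFun_nonneg (by positivity)))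
    (by positivity)]
  exact ENNReal.ofReal_le_ofReal (by linarith)

lemma mul_ofReal_log_add_le_mul_klFun_add {a b N : ℝ≥0∞} (ha_top : a ≠ ∞) (hb_top : b ≠ ∞)
    (hNb : N ≤ b) (hNa : N = 0 → a = 0) {t : ℝ} (ht1 : 1 ≤ t) :
    a * ENNReal.ofReal (Real.log t) + b ≤
      b * ENNReal.ofReal (klFun (a / b).toReal) + (ENNReal.ofReal t * N + a * logRatio b N) := by
  rcases eq_or_ne a 0 with rfl | ha0
  · simp [klFun_zero]
  have hN0 : N ≠ 0 := fun h ↦ ha0 (hNa h)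
  obtain ⟨a, ha, rfl⟩ := exists_ofReal_of_ne_top ha_top
  obtain ⟨b, hb, rfl⟩ := exists_ofReal_of_ne_top hb_top
  obtain ⟨N, hN, rfl⟩ := exists_ofReal_of_ne_top (ne_top_of_le_ne_top hb_top hNb)
  rw [ENNReal.ofReal_le_ofReal_iff hb] at hNb
  have hN' : 0 < N := by simpa using hN0
  have hb' : 0 < b := hN'.trans_le hNb
  have hlogN : 0 ≤ Real.log (b / N) := Real.log_nonneg ((one_le_div hN').2 hNb)
  have hlogt : 0 ≤ Real.log t := Real.log_nonneg ht1
  have ht0 : 0 < t := zero_lt_one.trans_le ht1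
  have key := mul_log_div_add_le_mul_klFun_add ha hb (mul_pos ht0 hN')
    fun h ↦ absurd h hb'.ne'
  rw [mul_div_assoc, Real.log_mul ht0.ne' (div_pos hN' hb').ne', ← inv_div,
    Real.log_inv] at key
  simp only [logRatio, ← ENNReal.ofReal_div_of_pos hb', ENNReal.toReal_ofReal, ha, hb, hN,
    div_nonneg, ← ENNReal.ofReal_mul, ht0.le]
  rw [← ENNReal.ofReal_add (mul_nonneg ha hlogt) hb, ← ENNReal.ofReal_add (by positivity)
    (mul_nonneg ha hlogN), ← ENNReal.ofReal_add (mul_nonneg hb (klFun_nonneg (by positivity)))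
    (by positivity)]
  exact ENNReal.ofReal_le_ofReal (by linarith)

section

variable {Ω : Type*} [MeasurableSpace Ω] {ν : Measure Ω}

lemma infoDiv_withDensity {f g : Ω → ℝ≥0∞} (hf : Measurable f) (hg : Measurable g)
    (hg_int : ∫⁻ x, g x ∂ν ≠ ∞) (hfg : ∀ᵐ x ∂ν, g x = 0 → f x = 0) :
    infoDiv (ν.withDensity f) (ν.withDensity g) =
      ∫⁻ x, g x * ENNReal.ofReal (klFun (f x / g x).toReal) ∂ν := by
  have hfg_meas : Measurable fun x ↦ f x / g x := hf.div hg
  have hdens : ν.withDensity f = (ν.withDensity g).withDensity fun x ↦ f x / g x := by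
    rw [← withDensity_mul ν hg hfg_meas]
    refine withDensity_congr_ae ?_
    filter_upwards [hfg, ae_lt_top hg hg_int] with x hx hx_top
    rcases eq_or_ne (g x) 0 with h0 | h0
    · simp [h0, hx h0]
    · exact (ENNReal.mul_div_cancel h0 hx_top.ne).symm
  have : IsFiniteMeasure (ν.withDensity g) := isFiniteMeasure_withDensity hg_int
  have hac : ν.withDensity f ≪ ν.withDensity g := hdens ▸ withDensity_absolutelyContinuous _ _
  have hrn : (ν.withDensity f).rnDeriv (ν.withDensity g) =ᵐ[ν.withDensity g] fun x ↦ f x / g x :=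
    hdens ▸ Measure.rnDeriv_withDensity _ hfg_meas
  rw [infoDiv, if_pos hac]
  calc _ = ∫⁻ x, ENNReal.ofReal (klFun (f x / g x).toReal) ∂ν.withDensity g :=
        lintegral_congr_ae <| hrn.mono fun x hx ↦ by simp only [hx, klFun]; ring_nf
    _ = _ := lintegral_withDensity_eq_lintegral_mul ν hg
        (measurable_klFun.comp hfg_meas.ennreal_toReal).ennreal_ofReal

end

def IsCondDensity {Ω : Type*} [MeasurableSpace Ω] (ν μ : Measure Ω) (G : MeasurableSpace Ω)
    (Y : Ω → ℝ≥0∞) : Prop :=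
  Measurable[G] Y ∧ ∀ A, MeasurableSet[G] A → ∫⁻ x in A, Y x ∂ν = μ A

namespace IsCondDensity

variable {Ω : Type*} {G G' : MeasurableSpace Ω} [mΩ : MeasurableSpace Ω] {ν μ : Measure Ω}
  {Y Y' : Ω → ℝ≥0∞}

lemma measurable (h : IsCondDensity ν μ G Y) (hG : G ≤ mΩ) : Measurable Y :=
  h.1.mono hG le_rfl

lemma lintegral_eq (h : IsCondDensity ν μ G Y) : ∫⁻ x, Y x ∂ν = μ Set.univ := by
  rw [← setLIntegral_univ, h.2 _ MeasurableSet.univ]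

lemma lintegral_mul_eq (h : IsCondDensity ν μ G Y) (hG : G ≤ mΩ) {H : Ω → ℝ≥0∞}
    (hH : Measurable[G] H) : ∫⁻ x, Y x * H x ∂ν = ∫⁻ x, H x ∂μ := by
  have htrim : (ν.withDensity Y).trim hG = μ.trim hG := by
    refine @Measure.ext _ G _ _ fun A hA ↦ ?_
    rw [trim_measurableSet_eq hG hA, trim_measurableSet_eq hG hA,
      withDensity_apply _ (hG A hA : MeasurableSet[mΩ] A), h.2 A hA]
  have := lintegral_withDensity_eq_lintegral_mul ν (h.measurable hG) (hH.mono hG le_rfl)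
  simp only [Pi.mul_apply] at this
  rw [← this, ← lintegral_trim hG hH, htrim, lintegral_trim hG hH]

lemma ae_lt_top [IsFiniteMeasure μ] (h : IsCondDensity ν μ G Y) (hG : G ≤ mΩ) :
    ∀ᵐ x ∂ν, Y x < ∞ :=
  MeasureTheory.ae_lt_top (h.measurable hG) (h.lintegral_eq ▸ measure_ne_top μ _)

lemma measure_preimage_zero (h : IsCondDensity ν μ G Y) (hG : G ≤ mΩ) : μ (Y ⁻¹' {0}) = 0 := by
  have hA : MeasurableSet[G] (Y ⁻¹' {0}) := h.1 (measurableSet_singleton 0)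
  rw [← h.2 _ hA, setLIntegral_congr_fun (hG _ hA) fun x hx ↦ hx, lintegral_zero]

lemma ae_ne_zero (h : IsCondDensity ν μ G Y) (hG : G ≤ mΩ) : ∀ᵐ x ∂μ, Y x ≠ 0 :=
  measure_eq_zero_iff_ae_notMem.1 (h.measure_preimage_zero hG)

lemma ae_ne_top [IsFiniteMeasure μ] (h : IsCondDensity ν μ G Y) (hG : G ≤ mΩ) :
    ∀ᵐ x ∂μ, Y x ≠ ∞ := by
  have hA : MeasurableSet[G] (Y ⁻¹' {∞}) := h.1 (measurableSet_singleton ∞)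
  refine ae_iff.2 ?_
  simp only [ne_eq, not_not]
  change μ (Y ⁻¹' {∞}) = 0
  rw [← h.2 _ hA]
  refine setLIntegral_measure_zero _ _ (measure_eq_zero_iff_ae_notMem.2 ?_)
  filter_upwards [h.ae_lt_top hG] with x hx using hx.ne

lemma ae_eq_zero_of_eq_zero (h : IsCondDensity ν μ G Y) (h' : IsCondDensity ν μ G' Y')
    (hGG' : G ≤ G') (hG' : G' ≤ mΩ) : ∀ᵐ x ∂ν, Y x = 0 → Y' x = 0 := by
  have hA : MeasurableSet[G] (Y ⁻¹' {0}) := h.1 (measurableSet_singleton 0)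
  have hint : ∫⁻ x in Y ⁻¹' {0}, Y' x ∂ν = 0 := by
    rw [h'.2 _ (hGG' _ hA), h.measure_preimage_zero (hGG'.trans hG')]
  exact (setLIntegral_eq_zero_iff (hG' _ (hGG' _ hA)) (h'.measurable hG')).1 hint

end IsCondDensity

lemma ofReal_scalarDiv_le_of_ge {k B D : ℝ≥0∞} (hk0 : k ≠ 0) (hkB : k ≤ B)
    (h : ∀ t : ℝ, 0 < t → t ≤ 1 →
      B ≤ D + (ENNReal.ofReal t * B + k * ENNReal.ofReal (Real.log t⁻¹))) :
    ENNReal.ofReal (scalarDiv k.toReal B.toReal) ≤ D := by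
  rcases eq_or_ne B ∞ with rfl | hB
  -- `∞.toReal = 0` and `k / 0 = 0`, so the left-hand side is `ofReal (-k) = 0`.
  · simp [scalarDiv, ENNReal.ofReal_eq_zero.2 (neg_nonpos.2 ENNReal.toReal_nonneg)]
  have hk : k ≠ ∞ := ne_top_of_le_ne_top hB hkB
  have hk' : 0 < k.toReal := ENNReal.toReal_pos hk0 hk
  have hkB' : k.toReal ≤ B.toReal := ENNReal.toReal_mono hB hkB
  have hB' : 0 < B.toReal := hk'.trans_le hkB'
  set t := k.toReal / B.toReal with ht
  have ht0 : 0 < t := div_pos hk' hB'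
  have hlog : 0 ≤ Real.log t⁻¹ := Real.log_nonneg (one_le_inv_iff₀.2 ⟨ht0, (div_le_one hB').2 hkB'⟩)
  have hsd : scalarDiv k.toReal B.toReal = B.toReal - (t * B.toReal + k.toReal * Real.log t⁻¹) := by
    rw [scalarDiv, Real.log_inv, ht, div_mul_cancel₀ _ hB'.ne']
    ring
  rw [hsd, ENNReal.ofReal_sub _ (by positivity), tsub_le_iff_right, ENNReal.ofReal_toReal hB,
    ENNReal.ofReal_add (by positivity) (by positivity), ENNReal.ofReal_mul ht0.le,
    ENNReal.ofReal_mul hk'.le, ENNReal.ofReal_toReal hB, ENNReal.ofReal_toReal hk]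
  exact h t ht0 ((div_le_one hB').2 hkB')

lemma ofReal_scalarDiv_le_of_le {k C D : ℝ≥0∞} (hk : k ≠ ∞) (hCk : C ≤ k)
    (h : ∀ t : ℝ, 1 ≤ t → k * ENNReal.ofReal (Real.log t) + C ≤ D + ENNReal.ofReal t * C) :
    ENNReal.ofReal (scalarDiv k.toReal C.toReal) ≤ D := by
  rcases eq_or_ne C 0 with rfl | hC0
  -- `k / 0 = 0`, so the left-hand side is `ofReal (-k) = 0`.
  · simp [scalarDiv, ENNReal.ofReal_eq_zero.2 (neg_nonpos.2 ENNReal.toReal_nonneg)]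
  have hC : C ≠ ∞ := ne_top_of_le_ne_top hk hCk
  have hC' : 0 < C.toReal := ENNReal.toReal_pos hC0 hC
  have hCk' : C.toReal ≤ k.toReal := ENNReal.toReal_mono hk hCk
  set t := k.toReal / C.toReal with ht
  have ht1 : 1 ≤ t := (one_le_div hC').2 hCk'
  have hsd : scalarDiv k.toReal C.toReal = (k.toReal * Real.log t + C.toReal) - t * C.toReal := by
    rw [scalarDiv, ht, div_mul_cancel₀ _ hC'.ne']
    ring
  rw [hsd, ENNReal.ofReal_sub _ (by positivity), tsub_le_iff_right,
    ENNReal.ofReal_add (mul_nonneg ENNReal.toReal_nonneg (Real.log_nonneg ht1)) hC'.le,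
    ENNReal.ofReal_mul ENNReal.toReal_nonneg, ENNReal.ofReal_mul (by positivity),
    ENNReal.ofReal_toReal hk, ENNReal.ofReal_toReal hC]
  exact h t ht1

lemma biSup_Icc_lt_top {f : ℕ → ℝ≥0∞} {m p : ℕ} (hf : ∀ j ∈ Set.Icc m p, f j < ∞) :
    ⨆ j ∈ Set.Icc m p, f j < ∞ :=
  (LinearOrder.supClosed (Set.Iio ∞)).biSup_mem (Set.finite_Icc m p) ENNReal.zero_lt_top hf

lemma biInf_Icc_pos {f : ℕ → ℝ≥0∞} {m p : ℕ} (hf : ∀ j ∈ Set.Icc m p, 0 < f j) :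
    0 < ⨅ j ∈ Set.Icc m p, f j :=
  (LinearOrder.infClosed (Set.Ioi (0 : ℝ≥0∞))).biInf_mem (Set.finite_Icc m p) ENNReal.zero_lt_top hf

section Filtration

variable {Ω : Type*} [mΩ : MeasurableSpace Ω] {ν μ : Measure Ω}
  {F : ℕ → MeasurableSpace Ω} {Y : ℕ → Ω → ℝ≥0∞} {m : ℕ}

lemma measurable_biSup_Icc (hFmono : Monotone F) (hY : ∀ j, IsCondDensity ν μ (F j) (Y j))
    {p q : ℕ} (hpq : p ≤ q) : Measurable[F q] fun x ↦ ⨆ j ∈ Set.Icc m p, Y j x :=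
  Measurable.biSup _ (Set.to_countable _) fun j hj ↦ (hY j).1.mono (hFmono (hj.2.trans hpq)) le_rfl

lemma measurable_biInf_Icc (hFmono : Monotone F) (hY : ∀ j, IsCondDensity ν μ (F j) (Y j))
    {p q : ℕ} (hpq : p ≤ q) : Measurable[F q] fun x ↦ ⨅ j ∈ Set.Icc m p, Y j x :=
  Measurable.biInf _ (Set.to_countable _) fun j hj ↦ (hY j).1.mono (hFmono (hj.2.trans hpq)) le_rfl

variable [IsFiniteMeasure μ]

lemma lintegral_biSup_Icc_le (hFmono : Monotone F) (hFle : ∀ j, F j ≤ mΩ)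
    (hY : ∀ j, IsCondDensity ν μ (F j) (Y j)) {p : ℕ} (hmp : m ≤ p) :
    ∫⁻ x, ⨆ j ∈ Set.Icc m p, Y j x ∂ν ≤
      ∫⁻ x, logRatio (⨆ j ∈ Set.Icc m p, Y j x) (Y m x) ∂μ + μ Set.univ := by
  induction p, hmp using Nat.le_induction with
  | base => simp [(hY m).lintegral_eq]
  | succ p hmp ih =>
    set M := fun x ↦ ⨆ j ∈ Set.Icc m p, Y j x
    set M' := fun x ↦ ⨆ j ∈ Set.Icc m (p + 1), Y j x
    have hM'_eq : ∀ x, M' x = Y (p + 1) x ⊔ M x := fun x ↦ by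
      show ⨆ j ∈ Set.Icc m (p + 1), Y j x = _
      rw [← Set.insert_Icc_right_eq_Icc_add_one (by omega), iSup_insert]
    have hYm_le : ∀ x, Y m x ≤ M x := fun x ↦
      le_biSup (f := fun j ↦ Y j x) (Set.left_mem_Icc.2 hmp)
    have hM_meas : Measurable[F (p + 1)] M := measurable_biSup_Icc hFmono hY p.le_succ
    have hM'_meas : Measurable[F (p + 1)] M' := measurable_biSup_Icc hFmono hY le_rfl
    have hstep : ∀ᵐ x ∂ν, M' x ≤ Y (p + 1) x * logRatio (M' x) (M x) + M x := by
      filter_upwards [(hY (p + 1)).ae_lt_top (hFle _),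
        (hY m).ae_eq_zero_of_eq_zero (hY (p + 1)) (hFmono (by omega)) (hFle _)] with x hx_top hx
      rw [hM'_eq]
      exact sup_le_mul_logRatio_add hx_top.ne fun h ↦ hx (le_antisymm (h ▸ hYm_le x) bot_le)
    have hadd : ∀ᵐ x ∂μ,
        logRatio (M' x) (Y m x) = logRatio (M' x) (M x) + logRatio (M x) (Y m x) := by
      filter_upwards [ae_all_iff.2 fun j ↦ (hY j).ae_ne_top (hFle j), (hY m).ae_ne_zero (hFle m)]
        with x hx_top hx_pos
      exact logRatio_add (pos_iff_ne_zero.2 hx_pos) (hYm_le x) ((hM'_eq x).symm ▸ le_sup_right)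
        (biSup_Icc_lt_top fun j _ ↦ (hx_top j).lt_top).ne
    calc ∫⁻ x, M' x ∂ν ≤ ∫⁻ x, Y (p + 1) x * logRatio (M' x) (M x) + M x ∂ν :=
          lintegral_mono_ae hstep
      _ = ∫⁻ x, logRatio (M' x) (M x) ∂μ + ∫⁻ x, M x ∂ν := by
          rw [lintegral_add_right _ (hM_meas.mono (hFle _) le_rfl),
            (hY (p + 1)).lintegral_mul_eq (hFle _) (hM'_meas.logRatio hM_meas)]
      _ ≤ ∫⁻ x, logRatio (M' x) (M x) ∂μ + (∫⁻ x, logRatio (M x) (Y m x) ∂μ + μ Set.univ) :=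
          add_le_add_right ih _
      _ = ∫⁻ x, logRatio (M' x) (Y m x) ∂μ + μ Set.univ := by
          rw [lintegral_congr_ae hadd, lintegral_add_left, add_assoc]
          exact ((hM'_meas.logRatio hM_meas).mono (hFle _) le_rfl)

lemma lintegral_logRatio_biInf_Icc_add_le (hFmono : Monotone F) (hFle : ∀ j, F j ≤ mΩ)
    (hY : ∀ j, IsCondDensity ν μ (F j) (Y j)) {p : ℕ} (hmp : m ≤ p) :
    ∫⁻ x, logRatio (Y m x) (⨅ j ∈ Set.Icc m p, Y j x) ∂μ + ∫⁻ x, ⨅ j ∈ Set.Icc m p, Y j x ∂ν ≤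
      μ Set.univ := by
  induction p, hmp using Nat.le_induction with
  | base => simp [(hY m).lintegral_eq]
  | succ p hmp ih =>
    set N := fun x ↦ ⨅ j ∈ Set.Icc m p, Y j x
    set N' := fun x ↦ ⨅ j ∈ Set.Icc m (p + 1), Y j x
    have hN'_eq : ∀ x, N' x = N x ⊓ Y (p + 1) x := fun x ↦ by
      show ⨅ j ∈ Set.Icc m (p + 1), Y j x = _
      rw [← Set.insert_Icc_right_eq_Icc_add_one (by omega), iInf_insert, inf_comm]
    have hN_le : ∀ x, N x ≤ Y m x := fun x ↦
      biInf_le (f := fun j ↦ Y j x) (Set.left_mem_Icc.2 hmp)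
    have hN_meas : Measurable[F (p + 1)] N := measurable_biInf_Icc hFmono hY p.le_succ
    have hN'_meas : Measurable[F (p + 1)] N' := measurable_biInf_Icc hFmono hY le_rfl
    have hstep : ∀ᵐ x ∂ν, Y (p + 1) x * logRatio (N x) (N' x) + N' x ≤ N x := by
      filter_upwards [(hY m).ae_lt_top (hFle m)] with x hx_top
      rw [hN'_eq]
      exact mul_logRatio_inf_add_inf_le (ne_top_of_le_ne_top hx_top.ne (hN_le x))
    have hadd : ∀ᵐ x ∂μ,
        logRatio (Y m x) (N' x) = logRatio (Y m x) (N x) + logRatio (N x) (N' x) := by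
      filter_upwards [ae_all_iff.2 fun j ↦ (hY j).ae_ne_zero (hFle j), (hY m).ae_ne_top (hFle m)]
        with x hx_pos hx_top
      exact logRatio_add (biInf_Icc_pos fun j _ ↦ pos_iff_ne_zero.2 (hx_pos j))
        ((hN'_eq x).symm ▸ inf_le_left) (hN_le x) hx_top
    calc ∫⁻ x, logRatio (Y m x) (N' x) ∂μ + ∫⁻ x, N' x ∂ν
        = ∫⁻ x, logRatio (Y m x) (N x) ∂μ +
            (∫⁻ x, logRatio (N x) (N' x) ∂μ + ∫⁻ x, N' x ∂ν) := by
          rw [lintegral_congr_ae hadd, lintegral_add_right, add_assoc]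
          exact (hN_meas.logRatio hN'_meas).mono (hFle _) le_rfl
      _ = ∫⁻ x, logRatio (Y m x) (N x) ∂μ +
            ∫⁻ x, Y (p + 1) x * logRatio (N x) (N' x) + N' x ∂ν := by
          rw [lintegral_add_right _ (hN'_meas.mono (hFle _) le_rfl),
            (hY (p + 1)).lintegral_mul_eq (hFle _) (hN_meas.logRatio hN'_meas)]
      _ ≤ ∫⁻ x, logRatio (Y m x) (N x) ∂μ + ∫⁻ x, N x ∂ν :=
          add_le_add_right (lintegral_mono_ae hstep) _
      _ ≤ μ Set.univ := ih

lemma lintegral_biSup_Icc_le_infoDiv_add (hFmono : Monotone F) (hFle : ∀ j, F j ≤ mΩ)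
    (hY : ∀ j, IsCondDensity ν μ (F j) (Y j)) {n : ℕ} (hmn : m ≤ n) {t : ℝ} (ht0 : 0 < t)
    (ht1 : t ≤ 1) :
    ∫⁻ x, ⨆ j ∈ Set.Icc m n, Y j x ∂ν ≤
      infoDiv (ν.withDensity (Y n)) (ν.withDensity (Y m)) +
        (ENNReal.ofReal t * ∫⁻ x, ⨆ j ∈ Set.Icc m n, Y j x ∂ν +
          μ Set.univ * ENNReal.ofReal (Real.log t⁻¹)) := by
  have hYn := (hY n).measurable (hFle n)
  have hYm := (hY m).measurable (hFle m)
  have hM : Measurable[F n] fun x ↦ ⨆ j ∈ Set.Icc m n, Y j x :=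
    measurable_biSup_Icc hFmono hY le_rfl
  have hpt : ∀ᵐ x ∂ν, Y n x * logRatio (⨆ j ∈ Set.Icc m n, Y j x) (Y m x) + Y m x ≤
      Y m x * ENNReal.ofReal (klFun (Y n x / Y m x).toReal) +
        (ENNReal.ofReal t * (⨆ j ∈ Set.Icc m n, Y j x) +
          Y n x * ENNReal.ofReal (Real.log t⁻¹)) := by
    filter_upwards [ae_all_iff.2 fun j ↦ (hY j).ae_lt_top (hFle j),
      (hY m).ae_eq_zero_of_eq_zero (hY n) (hFmono hmn) (hFle n)] with x hx_top hx
    exact mul_logRatio_add_le_mul_klFun_add (hx_top n).ne (hx_top m).ne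
      (biSup_Icc_lt_top fun j _ ↦ hx_top j).ne (le_biSup (f := fun j ↦ Y j x) ⟨hmn, le_rfl⟩)
      (le_biSup (f := fun j ↦ Y j x) ⟨le_rfl, hmn⟩) hx ht0 ht1
  calc ∫⁻ x, ⨆ j ∈ Set.Icc m n, Y j x ∂ν
      ≤ ∫⁻ x, logRatio (⨆ j ∈ Set.Icc m n, Y j x) (Y m x) ∂μ + μ Set.univ :=
        lintegral_biSup_Icc_le hFmono hFle hY hmn
    _ = ∫⁻ x, Y n x * logRatio (⨆ j ∈ Set.Icc m n, Y j x) (Y m x) + Y m x ∂ν := by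
        rw [lintegral_add_right _ hYm, (hY m).lintegral_eq, (hY n).lintegral_mul_eq (hFle n)
          (hM.logRatio ((hY m).1.mono (hFmono hmn) le_rfl))]
    _ ≤ _ := lintegral_mono_ae hpt
    _ = _ := by
        have hM' := hM.mono (hFle n) le_rfl
        rw [lintegral_add_right _ (by fun_prop), lintegral_add_left (by fun_prop),
          lintegral_const_mul _ hM', lintegral_mul_const _ hYn,
          (hY n).lintegral_eq, infoDiv_withDensity hYn hYm
            ((hY m).lintegral_eq ▸ measure_ne_top μ _)
            ((hY m).ae_eq_zero_of_eq_zero (hY n) (hFmono hmn) (hFle n))]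

lemma mul_ofReal_log_add_lintegral_biInf_Icc_le_infoDiv_add (hFmono : Monotone F)
    (hFle : ∀ j, F j ≤ mΩ) (hY : ∀ j, IsCondDensity ν μ (F j) (Y j)) {n : ℕ} (hmn : m ≤ n)
    {t : ℝ} (ht1 : 1 ≤ t) :
    μ Set.univ * ENNReal.ofReal (Real.log t) + ∫⁻ x, ⨅ j ∈ Set.Icc m n, Y j x ∂ν ≤
      infoDiv (ν.withDensity (Y n)) (ν.withDensity (Y m)) +
        ENNReal.ofReal t * ∫⁻ x, ⨅ j ∈ Set.Icc m n, Y j x ∂ν := by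
  have hYn := (hY n).measurable (hFle n)
  have hYm := (hY m).measurable (hFle m)
  have hN : Measurable[F n] fun x ↦ ⨅ j ∈ Set.Icc m n, Y j x :=
    measurable_biInf_Icc hFmono hY le_rfl
  have hN' := hN.mono (hFle n) le_rfl
  have hpt : ∀ᵐ x ∂ν, Y n x * ENNReal.ofReal (Real.log t) + Y m x ≤
      Y m x * ENNReal.ofReal (klFun (Y n x / Y m x).toReal) +
        (ENNReal.ofReal t * (⨅ j ∈ Set.Icc m n, Y j x) +
          Y n x * logRatio (Y m x) (⨅ j ∈ Set.Icc m n, Y j x)) := by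
    filter_upwards [ae_all_iff.2 fun j ↦ (hY j).ae_lt_top (hFle j),
      (ae_ball_iff (Set.to_countable (Set.Icc m n))).2 fun j hj ↦
        (hY j).ae_eq_zero_of_eq_zero (hY n) (hFmono hj.2) (hFle n)] with x hx_top hx_zero
    refine mul_ofReal_log_add_le_mul_klFun_add (hx_top n).ne (hx_top m).ne
      (biInf_le (f := fun j ↦ Y j x) (Set.left_mem_Icc.2 hmn)) (fun hN0 ↦ ?_) ht1
    by_contra hYn0
    exact (biInf_Icc_pos fun j hj ↦ pos_iff_ne_zero.2 fun h ↦ hYn0 (hx_zero j hj h)).ne' hN0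
  refine (ENNReal.add_le_add_iff_right (measure_ne_top μ Set.univ)).1 ?_
  calc μ Set.univ * ENNReal.ofReal (Real.log t) + ∫⁻ x, ⨅ j ∈ Set.Icc m n, Y j x ∂ν + μ Set.univ
      = ∫⁻ x, Y n x * ENNReal.ofReal (Real.log t) + Y m x ∂ν +
          ∫⁻ x, ⨅ j ∈ Set.Icc m n, Y j x ∂ν := by
        rw [lintegral_add_right _ hYm, lintegral_mul_const _ hYn, (hY n).lintegral_eq,
          (hY m).lintegral_eq]
        ring
    _ ≤ _ := add_le_add_left (lintegral_mono_ae hpt) _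
    _ = infoDiv (ν.withDensity (Y n)) (ν.withDensity (Y m)) +
          ENNReal.ofReal t * ∫⁻ x, ⨅ j ∈ Set.Icc m n, Y j x ∂ν +
          (∫⁻ x, logRatio (Y m x) (⨅ j ∈ Set.Icc m n, Y j x) ∂μ +
            ∫⁻ x, ⨅ j ∈ Set.Icc m n, Y j x ∂ν) := by
        rw [lintegral_add_right _ (by fun_prop), lintegral_add_left (by fun_prop),
          lintegral_const_mul _ hN', (hY n).lintegral_mul_eq (hFle n)
            (((hY m).1.mono (hFmono hmn) le_rfl).logRatio hN),
          infoDiv_withDensity hYn hYm ((hY m).lintegral_eq ▸ measure_ne_top μ _)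
            ((hY m).ae_eq_zero_of_eq_zero (hY n) (hFmono hmn) (hFle n))]
        ring
    _ ≤ _ := add_le_add_right (lintegral_logRatio_biInf_Icc_add_le hFmono hFle hY hmn) _

end Filtration

theorem min_max_divergence_bound_general
    {Ω : Type*} [mΩ : MeasurableSpace Ω] (ν : Measure Ω)
    (μ : Measure Ω) [IsFiniteMeasure μ]
    (k : ℝ≥0∞) (hk : k = μ Set.univ) (hkpos : 0 < k)
    (n : ℕ) (F : ℕ → MeasurableSpace Ω) (hFmono : Monotone F) (hFle : ∀ j, F j ≤ mΩ)
    (Y : ℕ → Ω → ℝ≥0∞) (hYmeas : ∀ j, Measurable[F j] (Y j))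
    (hY : ∀ j, ∀ A : Set Ω, MeasurableSet[F j] A → ∫⁻ x in A, Y j x ∂ν = μ A)
    (m : ℕ) (hmn : m ≤ n) :
    ENNReal.ofReal (scalarDiv k.toReal
        (∫⁻ x, ⨆ j ∈ Set.Icc m n, Y j x ∂ν).toReal)
      ≤ @infoDiv Ω mΩ (ν.withDensity (Y n)) (ν.withDensity (Y m)) ∧
    ENNReal.ofReal (scalarDiv k.toReal
        (∫⁻ x, ⨅ j ∈ Set.Icc m n, Y j x ∂ν).toReal)
      ≤ @infoDiv Ω mΩ (ν.withDensity (Y n)) (ν.withDensity (Y m)) := by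
  have hdens : ∀ j, IsCondDensity ν μ (F j) (Y j) := fun j ↦ ⟨hYmeas j, hY j⟩
  subst hk
  constructor
  · refine ofReal_scalarDiv_le_of_ge hkpos.ne' ?_ fun t ht0 ht1 ↦
      lintegral_biSup_Icc_le_infoDiv_add hFmono hFle hdens hmn ht0 ht1
    exact (hdens n).lintegral_eq ▸ lintegral_mono fun x ↦
      le_biSup (f := fun j ↦ Y j x) (Set.right_mem_Icc.2 hmn)
  · refine ofReal_scalarDiv_le_of_le (measure_ne_top μ _) ?_ fun t ht1 ↦
      mul_ofReal_log_add_lintegral_biInf_Icc_le_infoDiv_add hFmono hFle hdens hmn ht1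
    exact (hdens n).lintegral_eq ▸ lintegral_mono fun x ↦
      biInf_le (f := fun j ↦ Y j x) (Set.right_mem_Icc.2 hmn)

/-- If `Yⱼ` are conditional densities of `μ = ν.withDensity ρ` given the increasing
sub-σ-algebras `F₁ ⊆ ⋯ ⊆ Fₙ`, `μⱼ := ν.withDensity Yⱼ` and `k := μ(Ω) > 0`, then
`d(k ‖ ∫ Y_{m,n}^max dν) ≤ D(μₙ‖μₘ)` and `d(k ‖ ∫ Y_{m,n}^min dν) ≤ D(μₙ‖μₘ)`. -/
theorem min_max_divergence_bound
    {Ω : Type*} [mΩ : MeasurableSpace Ω] (ν : Measure Ω) [IsFiniteMeasure ν]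
    (ρ : Ω → ℝ≥0∞) (hρ : Measurable ρ)
    (μ : Measure Ω) (hμ : μ = ν.withDensity ρ) [IsFiniteMeasure μ]
    (hfin : infoDiv μ ν < ∞)
    (k : ℝ≥0∞) (hk : k = μ Set.univ) (hkpos : 0 < k)
    (n : ℕ) (F : ℕ → MeasurableSpace Ω) (hFmono : Monotone F) (hFle : ∀ j, F j ≤ mΩ)
    (Y : ℕ → Ω → ℝ≥0∞) (hYmeas : ∀ j, Measurable[F j] (Y j))
    (hY : ∀ j, ∀ A : Set Ω, MeasurableSet[F j] A → ∫⁻ x in A, Y j x ∂ν = μ A)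
    (m : ℕ) (hm : 1 ≤ m) (hmn : m ≤ n) :
    ENNReal.ofReal (scalarDiv k.toReal
        (∫⁻ x, ⨆ j ∈ Set.Icc m n, Y j x ∂ν).toReal)
      ≤ @infoDiv Ω mΩ (ν.withDensity (Y n)) (ν.withDensity (Y m)) ∧
    ENNReal.ofReal (scalarDiv k.toReal
        (∫⁻ x, ⨅ j ∈ Set.Icc m n, Y j x ∂ν).toReal)
      ≤ @infoDiv Ω mΩ (ν.withDensity (Y n)) (ν.withDensity (Y m)) :=
  min_max_divergence_bound_general (mΩ := mΩ) ν μ k hk hkpos n F hFmono hFle Y hYmeas hY m hmn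
end
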